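/- (Theorem 1, RGAS of the FIE) Suppose the system x⁺ = f(x,w), y = h(x) + v is i-IOSS with KL-function β and K-functions α₁, α₂, the FIE cost V_t satisfies Assumption 1, Assumption 2 holds, and at every time t the FIE attains its infimum (in particular V_t(x̂(0|t) − x̄₀, ŵ_t) ≤ V_t(x₀ − x̄₀, w)). Then the FIE is RGAS: there exist a KL-function βₓ and K-functions α_w, α_v, depending only on β, α₁, α₂ and the comparison functions of Assumptions 1–2, such that for all x₀, x̄₀, all bounded (w, v), and all t ∈ ℕ, |x(t; x₀, w) − x(t; x̂(0|t), ŵ_t)| ≤ βₓ(|x₀ − x̄₀|, t) + α_w(‖w‖_{0:t−1}) + α_v(‖v‖_{0:t}). -/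

import Mathlib

/-!
Optimality of the estimate bounds its cost by the cost of the true pair `(x₀, w)`, whose fitted
noise is `v`, so by Assumption 1 every term of the lower bound on the estimate's cost is at most
`R = ρᵤ(|x₀ - x̄₀|, t) + γᵤw(‖w‖) + γᵤv(‖v‖)`. Inverting `ρₗ(·, t)`, `γₗw` and `γₗv` bounds
`|x̂(0|t) - x̄₀|`, `‖ŵ‖` and the fitted noise `‖ν̂‖` by K-functions of `R`. Comparing the true and
the estimated trajectory through i-IOSS, Assumption 2 absorbs the initial-state term, and the
others are split with `α(a + b) ≤ α(2a) + α(2b)` and `α(a + b + c) ≤ α(3a) + α(3b) + α(3c)`.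
-/

open Filter Topology

/-- A K-function: continuous on [0,∞), strictly increasing on [0,∞), zero at zero. -/
def IsKFun (α : ℝ → ℝ) : Prop :=
  ContinuousOn α (Set.Ici 0) ∧ StrictMonoOn α (Set.Ici 0) ∧ α 0 = 0

/-- A K∞-function: a K-function tending to ∞ at ∞. -/
def IsKInftyFun (α : ℝ → ℝ) : Prop :=
  IsKFun α ∧ Tendsto α atTop atTop

/-- An L-function: continuous on [0,∞), nonincreasing on [0,∞), tending to 0 at ∞. -/
def IsLFun (φ : ℝ → ℝ) : Prop :=
  ContinuousOn φ (Set.Ici 0) ∧ AntitoneOn φ (Set.Ici 0) ∧ Tendsto φ atTop (𝓝 0)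

/-- A KL-function. -/
def IsKLFun (β : ℝ → ℝ → ℝ) : Prop :=
  (∀ t, 0 ≤ t → IsKFun fun s => β s t) ∧ (∀ s, 0 ≤ s → IsLFun fun t => β s t)

/-- Solution of the discrete-time system `x⁺ = f(x,w)`:
`traj f x₀ w t = x(t; x₀, w)`. -/
def traj {X W : Type*} (f : X → W → X) (x0 : X) (w : ℕ → W) : ℕ → X
  | 0 => x0
  | t + 1 => f (traj f x0 w t) (w t)

/-- `seqSup z m = max_{0 ≤ i < m} ‖z i‖` (0 when the index range is empty), so
`‖z‖_{0:t-1} = seqSup z t` and `‖z‖_{0:t} = seqSup z (t+1)`. -/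
noncomputable def seqSup {E : Type*} [SeminormedAddGroup E] (z : ℕ → E) (m : ℕ) : ℝ :=
  (((Finset.range m).sup fun i => ‖z i‖₊ : NNReal) : ℝ)

namespace IsKFun

variable {α α' : ℝ → ℝ}

lemma nonneg (hα : IsKFun α) {s : ℝ} (hs : 0 ≤ s) : 0 ≤ α s :=
  hα.2.2 ▸ hα.2.1.monotoneOn Set.self_mem_Ici hs hs

lemma apply_le_apply (hα : IsKFun α) {a b : ℝ} (ha : 0 ≤ a) (hab : a ≤ b) : α a ≤ α b :=
  hα.2.1.monotoneOn ha (ha.trans hab) hab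

lemma add (hα : IsKFun α) (hα' : IsKFun α') : IsKFun fun s => α s + α' s :=
  ⟨hα.1.add hα'.1, hα.2.1.add hα'.2.1, by simp [hα.2.2, hα'.2.2]⟩

lemma comp (hα : IsKFun α) (hα' : IsKFun α') : IsKFun fun s => α (α' s) := by
  have hmaps : Set.MapsTo α' (Set.Ici 0) (Set.Ici 0) := fun s hs => hα'.nonneg hs
  exact ⟨hα.1.comp hα'.1 hmaps,
    fun a ha b hb hab => hα.2.1 (hmaps ha) (hmaps hb) (hα'.2.1 ha hb hab),
    by simp [hα'.2.2, hα.2.2]⟩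

lemma apply_le_of_le_add (hα : IsKFun α) {a b c : ℝ} (ha : 0 ≤ a) (hb : 0 ≤ b) (hc : 0 ≤ c)
    (h : c ≤ a + b) : α c ≤ α (2 * a) + α (2 * b) := by
  have hmax : c ≤ 2 * max a b := by linarith [le_max_left a b, le_max_right a b]
  have := hα.apply_le_apply hc hmax
  rcases max_choice a b with hm | hm <;> rw [hm] at this
  · linarith [hα.nonneg (by linarith : 0 ≤ 2 * b)]
  · linarith [hα.nonneg (by linarith : 0 ≤ 2 * a)]

lemma apply_add_add_le (hα : IsKFun α) {a b c : ℝ} (ha : 0 ≤ a) (hb : 0 ≤ b) (hc : 0 ≤ c) :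
    α (a + b + c) ≤ α (3 * a) + α (3 * b) + α (3 * c) := by
  have hmax : a + b + c ≤ 3 * max a (max b c) := by
    linarith [le_max_left a (max b c), le_max_right a (max b c), le_max_left b c,
      le_max_right b c]
  have := hα.apply_le_apply (by positivity) hmax
  have h3a := hα.nonneg (by linarith : 0 ≤ 3 * a)
  have h3b := hα.nonneg (by linarith : 0 ≤ 3 * b)
  have h3c := hα.nonneg (by linarith : 0 ≤ 3 * c)
  rcases max_choice a (max b c) with hm | hm <;> rw [hm] at this
  · linarith
  · rcases max_choice b c with hm' | hm' <;> rw [hm'] at this <;> linarith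

end IsKFun

lemma isKFun_const_mul {c : ℝ} (hc : 0 < c) : IsKFun fun s => c * s :=
  ⟨(continuous_const_mul c).continuousOn, fun _ _ _ _ hab => mul_lt_mul_of_pos_left hab hc,
    mul_zero c⟩

lemma IsKLFun.nonneg {ρ : ℝ → ℝ → ℝ} (hρ : IsKLFun ρ) {s t : ℝ} (hs : 0 ≤ s) (ht : 0 ≤ t) :
    0 ≤ ρ s t :=
  (hρ.1 t ht).nonneg hs

lemma IsKLFun.add {ρ ρ' : ℝ → ℝ → ℝ} (hρ : IsKLFun ρ) (hρ' : IsKLFun ρ') :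
    IsKLFun fun s t => ρ s t + ρ' s t := by
  refine ⟨fun t ht => (hρ.1 t ht).add (hρ'.1 t ht), fun s hs => ?_⟩
  obtain ⟨hc, ha, hl⟩ := hρ.2 s hs
  obtain ⟨hc', ha', hl'⟩ := hρ'.2 s hs
  exact ⟨hc.add hc', ha.add ha', by simpa using hl.add hl'⟩

lemma IsKFun.comp_isKLFun {α : ℝ → ℝ} {ρ : ℝ → ℝ → ℝ} (hα : IsKFun α) (hρ : IsKLFun ρ) :
    IsKLFun fun s t => α (ρ s t) := by
  refine ⟨fun t ht => hα.comp (hρ.1 t ht), fun s hs => ?_⟩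
  obtain ⟨hc, ha, hl⟩ := hρ.2 s hs
  have hmaps : Set.MapsTo (ρ s) (Set.Ici 0) (Set.Ici 0) := fun t ht => hρ.nonneg hs ht
  refine ⟨hα.1.comp hc hmaps, fun a ha' b hb hab => hα.apply_le_apply (hmaps hb) (ha ha' hb hab),
    ?_⟩
  have hl₀ : Tendsto (ρ s) atTop (𝓝[Set.Ici 0] 0) :=
    tendsto_nhdsWithin_of_tendsto_nhds_of_eventually_within _ hl
      (eventually_ge_atTop 0 |>.mono fun t ht => hmaps ht)
  simpa [hα.2.2, Function.comp_def] using (hα.1 0 Set.self_mem_Ici).tendsto.comp hl₀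

/-- `γ` is extended to the strictly increasing bijection `x ↦ γ (max x 0) + min x 0` of `ℝ`,
whose inverse is continuous as an order isomorphism. -/
lemma IsKInftyFun.exists_rightInverse {γ : ℝ → ℝ} (hγ : IsKInftyFun γ) :
    ∃ g : ℝ → ℝ, IsKFun g ∧ ∀ r, 0 ≤ r → γ (g r) = r := by
  obtain ⟨⟨hcont, hmono, h0⟩, htop⟩ := hγ
  set γ' : ℝ → ℝ := fun x => γ (max x 0) + min x 0
  have hγ'_of_nonneg : ∀ x, 0 ≤ x → γ' x = γ x := fun x hx => by simp [γ', hx]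
  have hsm : StrictMono γ' := by
    intro a b hab
    rcases lt_or_ge 0 b with hb | hb
    · have := hmono (le_max_right a 0) hb.le (max_lt hab hb)
      simp only [γ', max_eq_left hb.le]
      linarith [min_le_min_right 0 hab.le]
    · simp [γ', hb, hab.le.trans hb, h0, hab]
  have hsurj : Function.Surjective γ' := by
    refine Continuous.surjective ?_ ?_ ?_
    · exact (hcont.comp_continuous (continuous_id.max continuous_const)
        fun x => le_max_right x 0).add (continuous_id.min continuous_const)
    · exact htop.congr' (eventually_ge_atTop 0 |>.mono fun x hx => (hγ'_of_nonneg x hx).symm)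
    · exact tendsto_id.congr' (eventually_le_atBot 0 |>.mono fun x hx => by simp [γ', hx, h0])
  set e := StrictMono.orderIsoOfSurjective γ' hsm hsurj
  have he0 : e.symm 0 = 0 := e.symm_apply_eq.2 (by simp [e, γ', h0])
  have hnonneg : ∀ r, 0 ≤ r → 0 ≤ e.symm r := fun r hr => he0 ▸ e.symm.monotone hr
  refine ⟨e.symm, ⟨e.symm.continuous.continuousOn, e.symm.strictMono.strictMonoOn _, he0⟩,
    fun r hr => ?_⟩
  rw [← hγ'_of_nonneg _ (hnonneg r hr)]
  exact StrictMono.orderIsoOfSurjective_self_symm_apply γ' hsm hsurj r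

lemma StrictMonoOn.le_of_apply_le_of_rightInverse {γ g : ℝ → ℝ}
    (hγ : StrictMonoOn γ (Set.Ici 0)) (hg : ∀ r, 0 ≤ r → γ (g r) = r ∧ 0 ≤ g r) {a r : ℝ}
    (ha : 0 ≤ a) (hr : 0 ≤ r) (h : γ a ≤ r) : a ≤ g r := by
  obtain ⟨hγg, hg₀⟩ := hg r hr
  exact (hγ.le_iff_le ha hg₀).1 (hγg.symm ▸ h)

lemma seqSup_nonneg {E : Type*} [SeminormedAddGroup E] (z : ℕ → E) (m : ℕ) : 0 ≤ seqSup z m :=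
  NNReal.coe_nonneg _

lemma seqSup_sub_le {E : Type*} [SeminormedAddCommGroup E] (a b : ℕ → E) (m : ℕ) :
    seqSup (fun i => a i - b i) m ≤ seqSup a m + seqSup b m := by
  rw [seqSup, seqSup, seqSup, ← NNReal.coe_add, NNReal.coe_le_coe]
  exact Finset.sup_le fun i hi =>
    (nnnorm_sub_le _ _).trans (add_le_add (Finset.le_sup (f := fun i => ‖a i‖₊) hi)
      (Finset.le_sup (f := fun i => ‖b i‖₊) hi))

section FullInformationEstimator

variable {X W Y : Type*} {f : X → W → X} {h : X → Y} {x0 xbar0 xhat : X} {w what : ℕ → W}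
  {v : ℕ → Y} {t : ℕ}

/-- The fitted noise `ν` of a candidate `(χ0, ω)` for the measurements `h(x(i; x0, w)) + v(i)`. -/
def fittedNoise [AddCommGroup Y] (f : X → W → X) (h : X → Y) (x0 : X) (w : ℕ → W) (v : ℕ → Y)
    (χ0 : X) (ω : ℕ → W) (i : ℕ) : Y :=
  h (traj f x0 w i) + v i - h (traj f χ0 ω i)

lemma fittedNoise_self [AddCommGroup Y] : fittedNoise f h x0 w v x0 w = v :=
  funext fun _ => add_sub_cancel_left _ _

lemma sub_eq_fittedNoise_sub [AddCommGroup Y] (i : ℕ) :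
    h (traj f x0 w i) - h (traj f xhat what i) = fittedNoise f h x0 w v xhat what i - v i := by
  simp only [fittedNoise]
  abel

variable [NormedAddCommGroup X] [NormedAddCommGroup W] [NormedAddCommGroup Y]

lemma fie_cost_le {V : X → (ℕ → W) → ℝ} {ρₗ ρᵤ : ℝ → ℝ → ℝ} {γₗw γₗv γᵤw γᵤv : ℝ → ℝ}
    (hA1 : ∀ χ0 ω,
      ρₗ ‖χ0 - xbar0‖ t + γₗw (seqSup ω t) + γₗv (seqSup (fittedNoise f h x0 w v χ0 ω) (t + 1))
        ≤ V χ0 ω ∧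
      V χ0 ω ≤
        ρᵤ ‖χ0 - xbar0‖ t + γᵤw (seqSup ω t) + γᵤv (seqSup (fittedNoise f h x0 w v χ0 ω) (t + 1)))
    (hopt : V xhat what ≤ V x0 w) :
    ρₗ ‖xhat - xbar0‖ t + γₗw (seqSup what t)
        + γₗv (seqSup (fittedNoise f h x0 w v xhat what) (t + 1))
      ≤ ρᵤ ‖x0 - xbar0‖ t + γᵤw (seqSup w t) + γᵤv (seqSup v (t + 1)) := by
  have htrue := (hA1 x0 w).2
  rw [fittedNoise_self] at htrue
  exact ((hA1 xhat what).1.trans hopt).trans htrue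

lemma fie_error_le {β ρₗ ι : ℝ → ℝ → ℝ} {α₁ α₂ γₗw γₗv gw gv : ℝ → ℝ} {R B : ℝ}
    (hβ : IsKFun fun s => β s t) (hα₁ : IsKFun α₁) (hα₂ : IsKFun α₂)
    (hIOSS : ‖traj f x0 w t - traj f xhat what t‖ ≤
      β ‖x0 - xhat‖ t + α₁ (seqSup (fun i => w i - what i) t)
        + α₂ (seqSup (fun i => h (traj f x0 w i) - h (traj f xhat what i)) (t + 1)))
    (hρₗ : IsKFun fun s => ρₗ s t) (hι : ∀ r, 0 ≤ r → ρₗ (ι r t) t = r ∧ 0 ≤ ι r t)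
    (hγₗw : IsKFun γₗw) (hgw : ∀ r, 0 ≤ r → γₗw (gw r) = r ∧ 0 ≤ gw r)
    (hγₗv : IsKFun γₗv) (hgv : ∀ r, 0 ≤ r → γₗv (gv r) = r ∧ 0 ≤ gv r)
    (hcost : ρₗ ‖xhat - xbar0‖ t + γₗw (seqSup what t)
      + γₗv (seqSup (fittedNoise f h x0 w v xhat what) (t + 1)) ≤ R)
    (hB : β (‖x0 - xbar0‖ + ι R t) t ≤ B) :
    ‖traj f x0 w t - traj f xhat what t‖ ≤
      B + α₁ (2 * seqSup w t) + α₂ (2 * seqSup v (t + 1)) + (α₁ (2 * gw R) + α₂ (2 * gv R)) := by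
  have hρ := hρₗ.nonneg (norm_nonneg (xhat - xbar0))
  have hγw := hγₗw.nonneg (seqSup_nonneg what t)
  have hγv := hγₗv.nonneg (seqSup_nonneg (fittedNoise f h x0 w v xhat what) (t + 1))
  have hR : 0 ≤ R := by linarith
  have he : ‖xhat - xbar0‖ ≤ ι R t :=
    hρₗ.2.1.le_of_apply_le_of_rightInverse hι (norm_nonneg _) hR (by linarith)
  have ha : seqSup what t ≤ gw R :=
    hγₗw.2.1.le_of_apply_le_of_rightInverse hgw (seqSup_nonneg _ _) hR (by linarith)
  have hb : seqSup (fittedNoise f h x0 w v xhat what) (t + 1) ≤ gv R :=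
    hγₗv.2.1.le_of_apply_le_of_rightInverse hgv (seqSup_nonneg _ _) hR (by linarith)
  have hx : β ‖x0 - xhat‖ t ≤ B := by
    refine (hβ.apply_le_apply (norm_nonneg _) ?_).trans hB
    linarith [norm_sub_le_norm_sub_add_norm_sub x0 xbar0 xhat, norm_sub_rev xbar0 xhat]
  have hw : α₁ (seqSup (fun i => w i - what i) t) ≤ α₁ (2 * seqSup w t) + α₁ (2 * gw R) :=
    hα₁.apply_le_of_le_add (seqSup_nonneg _ _) (hgw R hR).2 (seqSup_nonneg _ _)
      ((seqSup_sub_le _ _ _).trans (by linarith))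
  have hy : α₂ (seqSup (fun i => h (traj f x0 w i) - h (traj f xhat what i)) (t + 1)) ≤
      α₂ (2 * gv R) + α₂ (2 * seqSup v (t + 1)) := by
    simp only [sub_eq_fittedNoise_sub (v := v)]
    exact hα₂.apply_le_of_le_add (hgv R hR).2 (seqSup_nonneg _ _) (seqSup_nonneg _ _)
      ((seqSup_sub_le _ _ _).trans (by linarith))
  linarith

end FullInformationEstimator

theorem fie_rgas_general
    (n g p : ℕ)
    (f : EuclideanSpace ℝ (Fin n) → EuclideanSpace ℝ (Fin g) → EuclideanSpace ℝ (Fin n))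
    (h : EuclideanSpace ℝ (Fin n) → EuclideanSpace ℝ (Fin p))
    -- i-IOSS of the system
    (β : ℝ → ℝ → ℝ) (α₁ α₂ : ℝ → ℝ)
    (hβ : IsKLFun β) (hα₁ : IsKFun α₁) (hα₂ : IsKFun α₂)
    (hIOSS : ∀ (x01 x02 : EuclideanSpace ℝ (Fin n)) (w1 w2 : ℕ → EuclideanSpace ℝ (Fin g))
      (t : ℕ),
      ‖traj f x01 w1 t - traj f x02 w2 t‖ ≤
        β ‖x01 - x02‖ t + α₁ (seqSup (fun i => w1 i - w2 i) t)
          + α₂ (seqSup (fun i => h (traj f x01 w1 i) - h (traj f x02 w2 i)) (t + 1)))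
    -- comparison functions of Assumption 1
    (ρₗ ρᵤ : ℝ → ℝ → ℝ) (γₗw γₗv γᵤw γᵤv : ℝ → ℝ)
    (hρᵤ : IsKLFun ρᵤ)
    (hρₗ : ∀ t : ℝ, 0 ≤ t → IsKInftyFun fun s => ρₗ s t)
    (hγₗw : IsKInftyFun γₗw) (hγₗv : IsKInftyFun γₗv)
    (hγᵤw : IsKInftyFun γᵤw) (hγᵤv : IsKInftyFun γᵤv)
    -- γ̲_{x,t}⁻¹ : the inverse of s ↦ ρₗ s t on [0, ∞)
    (ι : ℝ → ℝ → ℝ)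
    (hι₂ : ∀ t : ℝ, 0 ≤ t → ∀ r : ℝ, 0 ≤ r → ρₗ (ι r t) t = r ∧ 0 ≤ ι r t)
    -- Assumption 2
    (hA2 : ∃ βbarx αbarw αbarv : _, IsKLFun βbarx ∧ IsKFun αbarw ∧ IsKFun αbarv ∧
      ∀ sx sw sv t : ℝ, 0 ≤ sx → 0 ≤ sw → 0 ≤ sv → 0 ≤ t →
        β (sx + ι (ρᵤ sx t + γᵤw sw + γᵤv sv) t) t ≤ βbarx sx t + αbarw sw + αbarv sv) :
    -- RGAS of the FIE
    ∃ βx : ℝ → ℝ → ℝ, ∃ αw αv : ℝ → ℝ, IsKLFun βx ∧ IsKFun αw ∧ IsKFun αv ∧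
      ∀ (x0 xbar0 : EuclideanSpace ℝ (Fin n)) (w : ℕ → EuclideanSpace ℝ (Fin g))
        (v : ℕ → EuclideanSpace ℝ (Fin p)),
        (∃ Mw : ℝ, ∀ i, ‖w i‖ ≤ Mw) → (∃ Mv : ℝ, ∀ i, ‖v i‖ ≤ Mv) →
        ∀ (V : ℕ → EuclideanSpace ℝ (Fin n) → (ℕ → EuclideanSpace ℝ (Fin g)) → ℝ)
          (xhat0 : ℕ → EuclideanSpace ℝ (Fin n)) (what : ℕ → ℕ → EuclideanSpace ℝ (Fin g)),
          -- Assumption 1: bounds on the cost, where the fitted noise of a candidate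
          -- (χ0, ω) is ν(i) = y(i) - h(x(i; χ0, ω)) with y(i) = h(x(i; x0, w)) + v(i)
          (∀ (t : ℕ) (χ0 : EuclideanSpace ℝ (Fin n)) (ω : ℕ → EuclideanSpace ℝ (Fin g)),
            ρₗ ‖χ0 - xbar0‖ t + γₗw (seqSup ω t)
              + γₗv (seqSup
                  (fun i => (h (traj f x0 w i) + v i) - h (traj f χ0 ω i)) (t + 1))
              ≤ V t χ0 ω ∧
            V t χ0 ω ≤ ρᵤ ‖χ0 - xbar0‖ t + γᵤw (seqSup ω t)
              + γᵤv (seqSup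
                  (fun i => (h (traj f x0 w i) + v i) - h (traj f χ0 ω i)) (t + 1))) →
          -- the FIE attains its infimum at (xhat0 t, what t); in particular optimality
          (∀ t : ℕ, V t (xhat0 t) (what t) ≤ V t x0 w) →
          ∀ t : ℕ,
            ‖traj f x0 w t - traj f (xhat0 t) (what t) t‖ ≤
              βx ‖x0 - xbar0‖ t + αw (seqSup w t) + αv (seqSup v (t + 1)) := by
  obtain ⟨βbar, αbarw, αbarv, hβbar, hαbarw, hαbarv, hA2⟩ := hA2
  obtain ⟨gw, hgw, hγgw⟩ := hγₗw.exists_rightInverse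
  obtain ⟨gv, hgv, hγgv⟩ := hγₗv.exists_rightInverse
  -- `κ R` bounds the i-IOSS terms caused by the estimate's cost bound `R`; splitting `R` into
  -- its three summands distributes `κ R` over the three gains.
  set κ : ℝ → ℝ := fun r => α₁ (2 * gw r) + α₂ (2 * gv r)
  have hκ : IsKFun κ := (hα₁.comp ((isKFun_const_mul two_pos).comp hgw)).add
    (hα₂.comp ((isKFun_const_mul two_pos).comp hgv))
  have hκ₃ : IsKFun fun r => κ (3 * r) := hκ.comp (isKFun_const_mul three_pos)
  refine ⟨fun s t => βbar s t + κ (3 * ρᵤ s t), fun s => αbarw s + α₁ (2 * s) + κ (3 * γᵤw s),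
    fun s => αbarv s + α₂ (2 * s) + κ (3 * γᵤv s), hβbar.add (hκ₃.comp_isKLFun hρᵤ),
    (hαbarw.add (hα₁.comp (isKFun_const_mul two_pos))).add (hκ₃.comp hγᵤw.1),
    (hαbarv.add (hα₂.comp (isKFun_const_mul two_pos))).add (hκ₃.comp hγᵤv.1), ?_⟩
  intro x0 xbar0 w v _ _ V xhat0 what hA1 hopt t
  have ht : (0 : ℝ) ≤ t := t.cast_nonneg
  have hsx := norm_nonneg (x0 - xbar0)
  have hsw := seqSup_nonneg w t
  have hsv := seqSup_nonneg v (t + 1)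
  have herr := fie_error_le (hβ.1 t ht) hα₁ hα₂ (hIOSS x0 (xhat0 t) w (what t) t) (hρₗ t ht).1
    (hι₂ t ht) hγₗw.1 (fun r hr => ⟨hγgw r hr, hgw.nonneg hr⟩)
    hγₗv.1 (fun r hr => ⟨hγgv r hr, hgv.nonneg hr⟩)
    (fie_cost_le (hA1 t) (hopt t)) (hA2 _ _ _ _ hsx hsw hsv ht)
  have hκR := hκ.apply_add_add_le (hρᵤ.nonneg hsx ht) (hγᵤw.1.nonneg hsw) (hγᵤv.1.nonneg hsv)
  linarith

/-- (Theorem 1, RGAS of the FIE.)  If the system is i-IOSS, the cost satisfies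
Assumption 1, Assumption 2 holds, and the FIE attains its infimum, then the FIE
is RGAS, with comparison functions depending only on the i-IOSS comparison
functions and those of Assumptions 1–2. -/
theorem fie_rgas
    (n g p : ℕ)
    (f : EuclideanSpace ℝ (Fin n) → EuclideanSpace ℝ (Fin g) → EuclideanSpace ℝ (Fin n))
    (h : EuclideanSpace ℝ (Fin n) → EuclideanSpace ℝ (Fin p))
    (hf : Continuous fun q : EuclideanSpace ℝ (Fin n) × EuclideanSpace ℝ (Fin g) => f q.1 q.2)
    (hh : Continuous h)
    -- i-IOSS of the system
    (β : ℝ → ℝ → ℝ) (α₁ α₂ : ℝ → ℝ)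
    (hβ : IsKLFun β) (hα₁ : IsKFun α₁) (hα₂ : IsKFun α₂)
    (hIOSS : ∀ (x01 x02 : EuclideanSpace ℝ (Fin n)) (w1 w2 : ℕ → EuclideanSpace ℝ (Fin g))
      (t : ℕ),
      ‖traj f x01 w1 t - traj f x02 w2 t‖ ≤
        β ‖x01 - x02‖ t + α₁ (seqSup (fun i => w1 i - w2 i) t)
          + α₂ (seqSup (fun i => h (traj f x01 w1 i) - h (traj f x02 w2 i)) (t + 1)))
    -- comparison functions of Assumption 1
    (ρₗ ρᵤ : ℝ → ℝ → ℝ) (γₗw γₗv γᵤw γᵤv : ℝ → ℝ)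
    (hρᵤ : IsKLFun ρᵤ)
    (hρₗ : ∀ t : ℝ, 0 ≤ t → IsKInftyFun fun s => ρₗ s t)
    (hγₗw : IsKInftyFun γₗw) (hγₗv : IsKInftyFun γₗv)
    (hγᵤw : IsKInftyFun γᵤw) (hγᵤv : IsKInftyFun γᵤv)
    -- γ̲_{x,t}⁻¹ : the inverse of s ↦ ρₗ s t on [0, ∞)
    (ι : ℝ → ℝ → ℝ)
    (hι₁ : ∀ t : ℝ, 0 ≤ t → ∀ s : ℝ, 0 ≤ s → ι (ρₗ s t) t = s)
    (hι₂ : ∀ t : ℝ, 0 ≤ t → ∀ r : ℝ, 0 ≤ r → ρₗ (ι r t) t = r ∧ 0 ≤ ι r t)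
    -- Assumption 2
    (hA2 : ∃ βbarx αbarw αbarv : _, IsKLFun βbarx ∧ IsKFun αbarw ∧ IsKFun αbarv ∧
      ∀ sx sw sv t : ℝ, 0 ≤ sx → 0 ≤ sw → 0 ≤ sv → 0 ≤ t →
        β (sx + ι (ρᵤ sx t + γᵤw sw + γᵤv sv) t) t ≤ βbarx sx t + αbarw sw + αbarv sv) :
    -- RGAS of the FIE
    ∃ βx : ℝ → ℝ → ℝ, ∃ αw αv : ℝ → ℝ, IsKLFun βx ∧ IsKFun αw ∧ IsKFun αv ∧
      ∀ (x0 xbar0 : EuclideanSpace ℝ (Fin n)) (w : ℕ → EuclideanSpace ℝ (Fin g))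
        (v : ℕ → EuclideanSpace ℝ (Fin p)),
        (∃ Mw : ℝ, ∀ i, ‖w i‖ ≤ Mw) → (∃ Mv : ℝ, ∀ i, ‖v i‖ ≤ Mv) →
        ∀ (V : ℕ → EuclideanSpace ℝ (Fin n) → (ℕ → EuclideanSpace ℝ (Fin g)) → ℝ)
          (xhat0 : ℕ → EuclideanSpace ℝ (Fin n)) (what : ℕ → ℕ → EuclideanSpace ℝ (Fin g)),
          -- Assumption 1: bounds on the cost, where the fitted noise of a candidate
          -- (χ0, ω) is ν(i) = y(i) - h(x(i; χ0, ω)) with y(i) = h(x(i; x0, w)) + v(i)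
          (∀ (t : ℕ) (χ0 : EuclideanSpace ℝ (Fin n)) (ω : ℕ → EuclideanSpace ℝ (Fin g)),
            ρₗ ‖χ0 - xbar0‖ t + γₗw (seqSup ω t)
              + γₗv (seqSup
                  (fun i => (h (traj f x0 w i) + v i) - h (traj f χ0 ω i)) (t + 1))
              ≤ V t χ0 ω ∧
            V t χ0 ω ≤ ρᵤ ‖χ0 - xbar0‖ t + γᵤw (seqSup ω t)
              + γᵤv (seqSup
                  (fun i => (h (traj f x0 w i) + v i) - h (traj f χ0 ω i)) (t + 1))) →
          -- the FIE attains its infimum at (xhat0 t, what t); in particular optimality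
          (∀ t : ℕ, V t (xhat0 t) (what t) ≤ V t x0 w) →
          ∀ t : ℕ,
            ‖traj f x0 w t - traj f (xhat0 t) (what t) t‖ ≤
              βx ‖x0 - xbar0‖ t + αw (seqSup w t) + αv (seqSup v (t + 1)) :=
  fie_rgas_general n g p f h β α₁ α₂ hβ hα₁ hα₂ hIOSS ρₗ ρᵤ γₗw γₗv γᵤw γᵤv hρᵤ hρₗ hγₗw hγₗv hγᵤw
    hγᵤv ι hι₂ hA2
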